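/- arXiv:1110.1821 — 4 statements merged into one kernel-verified Lean document; each statement's English description precedes it below -/
import Mathlib

section
/- If A is a block-diagonal matrix with blocks B (of size m×m) and C (of size (n−m)×(n−m)), then Ferm_k(A) = Ferm_k(B) · Ferm_k(C). -/
/-- The number of cycles of a permutation, counting fixed points as 1-cycles. -/
def cycleCount {α : Type*} [Fintype α] [DecidableEq α] (π : Equiv.Perm α) : ℕ :=
  π.cycleType.card + (Finset.univ.filter fun a => π a = a).card

/-- The fermionant of a square matrix with parameter `k`. -/
def ferm {α : Type*} [Fintype α] [DecidableEq α] {R : Type*} [CommRing R]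
    (k : R) (A : Matrix α α R) : R :=
  (-1 : R) ^ (Fintype.card α) *
    ∑ π : Equiv.Perm α, (-k) ^ (cycleCount π) * ∏ i, A i (π i)

/-!
A permutation of `α ⊕ β` that sends some `inl a` to the right summand picks up an entry of the
vanishing top-right block, so only permutations `σ.sumCongr τ` contribute. The cycles of
`σ.sumCongr τ` are those of `σ` together with those of `τ`, so the weight `(-k) ^ cycleCount`,
the product of entries and the sign `(-1) ^ card` all factor.
-/

open Equiv Finset Matrix

namespace Equiv.Perm

variable {α β : Type*}

theorem sumCongr_one_eq_extendDomain (σ : Perm α) :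
    sumCongr σ (1 : Perm β) = σ.extendDomain sumIsLeft.symm := by
  ext (a | b) <;> rfl

theorem one_sumCongr_eq_extendDomain (τ : Perm β) :
    sumCongr (1 : Perm α) τ = τ.extendDomain sumIsRight.symm := by
  ext (a | b) <;> rfl

theorem sum_eq_sum_sumCongr [Fintype α] [DecidableEq α] [Fintype β] [DecidableEq β]
    {M : Type*} [AddCommMonoid M] (f : Perm (α ⊕ β) → M)
    (hf : ∀ π ∉ (sumCongrHom α β).range, f π = 0) :
    ∑ π, f π = ∑ σ : Perm α, ∑ τ : Perm β, f (σ.sumCongr τ) := by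
  rw [← Fintype.sum_prod_type']
  exact (Fintype.sum_of_injective _ sumCongrHom_injective _ _ hf fun _ => rfl).symm

variable [Fintype α] [DecidableEq α] [Fintype β] [DecidableEq β]

theorem cycleType_sumCongr (σ : Perm α) (τ : Perm β) :
    (σ.sumCongr τ).cycleType = σ.cycleType + τ.cycleType := by
  have hsplit : σ.sumCongr τ = sumCongr σ 1 * sumCongr 1 τ := by
    rw [sumCongr_mul, mul_one, one_mul]
  have hdisj : Disjoint (sumCongr σ (1 : Perm β)) (sumCongr (1 : Perm α) τ) := by
    rintro (a | b)
    exacts [Or.inr rfl, Or.inl rfl]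
  rw [hsplit, hdisj.cycleType_mul, sumCongr_one_eq_extendDomain, one_sumCongr_eq_extendDomain,
    cycleType_extendDomain, cycleType_extendDomain]

end Equiv.Perm

open Equiv.Perm

theorem cycleCount_sumCongr {α β : Type*} [Fintype α] [DecidableEq α] [Fintype β]
    [DecidableEq β] (σ : Perm α) (τ : Perm β) :
    cycleCount (σ.sumCongr τ) = cycleCount σ + cycleCount τ := by
  have hfixed : #{x | σ.sumCongr τ x = x} = #{a | σ a = a} + #{b | τ b = b} := by
    simp only [card_filter, Fintype.sum_sum_type]
    simp
  rw [cycleCount, cycleCount, cycleCount, cycleType_sumCongr, Multiset.card_add, hfixed]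
  ring

namespace Matrix

variable {α β R : Type*} [Fintype α] [Fintype β] [CommRing R]

theorem prod_fromBlocks_sumCongr (A : Matrix α α R) (B : Matrix α β R) (C : Matrix β α R)
    (D : Matrix β β R) (σ : Perm α) (τ : Perm β) :
    ∏ i, fromBlocks A B C D i (σ.sumCongr τ i) = (∏ i, A i (σ i)) * ∏ j, D j (τ j) :=
  Fintype.prod_sum_type _

theorem prod_fromBlocks_zero₁₂_eq_zero [DecidableEq α] [DecidableEq β] (A : Matrix α α R)
    (C : Matrix β α R) (D : Matrix β β R) {π : Perm (α ⊕ β)}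
    (hπ : π ∉ (sumCongrHom α β).range) :
    ∏ i, fromBlocks A 0 C D i (π i) = 0 := by
  have hleft : ¬ ∀ a, (π (.inl a)).isLeft := fun h =>
    hπ <| mem_sumCongrHom_range_of_perm_mapsTo_inl <| by
      rintro _ ⟨a, rfl⟩
      exact ⟨_, Sum.inl_getLeft _ (h a)⟩
  push Not at hleft
  obtain ⟨a, ha⟩ := hleft
  apply prod_eq_zero (mem_univ (.inl a))
  rw [← Sum.inr_getRight (π (.inl a)) (by simpa using ha)]
  rfl

end Matrix

theorem ferm_fromBlocks_zero₁₂ {α β R : Type*} [Fintype α] [DecidableEq α] [Fintype β]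
    [DecidableEq β] [CommRing R] (k : R) (A : Matrix α α R) (C : Matrix β α R)
    (D : Matrix β β R) :
    ferm k (fromBlocks A 0 C D) = ferm k A * ferm k D := by
  have hsum : ∑ π : Perm (α ⊕ β), (-k) ^ cycleCount π * ∏ i, fromBlocks A 0 C D i (π i) =
      (∑ σ : Perm α, (-k) ^ cycleCount σ * ∏ i, A i (σ i)) *
        ∑ τ : Perm β, (-k) ^ cycleCount τ * ∏ j, D j (τ j) := by
    rw [sum_eq_sum_sumCongr _ fun π hπ => by
      rw [prod_fromBlocks_zero₁₂_eq_zero A C D hπ, mul_zero], sum_mul_sum]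
    simp only [cycleCount_sumCongr, prod_fromBlocks_sumCongr, pow_add]
    exact sum_congr rfl fun _ _ => sum_congr rfl fun _ _ => by ring
  rw [ferm, ferm, ferm, hsum, Fintype.card_sum, pow_add]
  ring

/-- The fermionant of a block-diagonal matrix with blocks `B` (of size `m × m`) and
`C` (of size `(n-m) × (n-m)`) is the product of the fermionants of the blocks. -/
theorem ferm_blockDiagonal {m l : ℕ} {R : Type*} [CommRing R] (k : R)
    (B : Matrix (Fin m) (Fin m) R) (C : Matrix (Fin l) (Fin l) R) :
    ferm k (Matrix.fromBlocks B 0 0 C) = ferm k B * ferm k C :=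
  ferm_fromBlocks_zero₁₂ k B 0 C
end

section
/- Let G be a finite simple undirected graph on n > 4 vertices with adjacency matrix A. Then Ferm_2(A) = (-1)^n Σ over Hamiltonian-style circuit partitions P of G of (-2)^{c_2(P)} (-4)^{c'(P)}, where c_2(P) is the number of 2-cycles (back-and-forth traversals of a single edge) and c'(P) the number of cycles of length ≥ 3 in P. Equivalently, each permutation π with Π_i A_{i,π(i)} ≠ 0 has all cycles of length ≥ 2 forming cycles in G, and circuit partitions with c' cycles of length ≥ 3 correspond to exactly 2^{c'} such permutations. -/
open Finset

/-- The number of 2-cycles (transpositions) in the cycle decomposition of `π`. -/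
def twoCycleCount {α : Type*} [Fintype α] [DecidableEq α] (π : Equiv.Perm α) : ℕ :=
  (Finset.univ.filter fun a => π a ≠ a ∧ π (π a) = a).card / 2

/-- The number of cycles of length at least 3 in the cycle decomposition of `π`. -/
def longCycleCount {α : Type*} [Fintype α] [DecidableEq α] (π : Equiv.Perm α) : ℕ :=
  (π.cycleType.filter fun l => 3 ≤ l).card

/-- Two permutations determine the same circuit partition if they have the same
cycle-orbits and each traverses every cycle in the same or the reversed direction. -/
def SameCircuitPartition {α : Type*} (π π' : Equiv.Perm α) : Prop :=
  (∀ a b, π.SameCycle a b ↔ π'.SameCycle a b) ∧ ∀ a, π' a = π a ∨ π' a = π⁻¹ a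

instance {α : Type*} [Fintype α] [DecidableEq α] (π π' : Equiv.Perm α) :
    Decidable (SameCircuitPartition π π') := by
  unfold SameCircuitPartition; infer_instance

/-!
A permutation contributes to `Ferm₂ A` exactly when it sends every vertex to a neighbour, so its
cycles are closed walks in `G` and form a circuit partition. Two permutations give the same
circuit partition when they differ by reversing some of the cycles. Reversing a 2-cycle gives back
the same permutation. Reversing a cycle of length at least three gives a new one, so the class of
`π` has `2^{c'}` elements. A fixed-point-free `π` has `c₂ + c'` cycles, and
`(-2)^{c₂ + c'} = (-2)^{c₂} (-4)^{c'} / 2^{c'}`.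
-/

namespace Equiv.Perm

theorem sameCycle_iff_of_forall_sameCycle_apply_eq {α : Type*} [Finite α] {σ τ : Perm α}
    {a : α} (h : ∀ x, τ.SameCycle a x → σ x = τ x) (b : α) :
    σ.SameCycle a b ↔ τ.SameCycle a b := by
  have hpow : ∀ k : ℕ, (σ ^ k) a = (τ ^ k) a := by
    intro k
    induction k with
    | zero => rfl
    | succ k ih => rw [pow_succ', mul_apply, ih, h _ SameCycle.rfl.pow_right, pow_succ', mul_apply]
  constructor
  · intro hab
    obtain ⟨k, rfl⟩ := hab.exists_nat_pow_eq
    exact ⟨k, by rw [zpow_natCast, ← hpow]⟩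
  · intro hab
    obtain ⟨k, rfl⟩ := hab.exists_nat_pow_eq
    exact ⟨k, by rw [zpow_natCast, hpow]⟩

theorem _root_.SameCircuitPartition.inv {α : Type*} {π π' : Perm α}
    (h : SameCircuitPartition π π') : SameCircuitPartition π⁻¹ π' :=
  ⟨fun a b => sameCycle_inv.trans (h.1 a b), fun a => by rw [inv_inv]; exact (h.2 a).symm⟩

variable {α : Type*} [Fintype α] [DecidableEq α]

theorem apply_apply_eq_self_iff_card_support_cycleOf_eq_two {π : Perm α} {a : α}
    (ha : π a ≠ a) : π (π a) = a ↔ #(π.cycleOf a).support = 2 := by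
  have hcyc := π.isCycle_cycleOf ha
  have hc : π.cycleOf a ≠ 1 := by rwa [Ne, cycleOf_eq_one_iff]
  rw [← hcyc.orderOf, orderOf_eq_prime_iff, and_iff_left hc,
    hcyc.pow_eq_one_iff' (by rwa [cycleOf_apply_self]), cycleOf_pow_apply_self, pow_two,
    mul_apply]

theorem inv_apply_ne_apply_iff_three_le_card_support_cycleOf {π : Perm α} {a : α} :
    π⁻¹ a ≠ π a ↔ 3 ≤ #(π.cycleOf a).support := by
  by_cases ha : π a = a
  · have ha' : π⁻¹ a = a := inv_eq_iff_eq.mpr ha.symm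
    simp [ha, ha', (cycleOf_eq_one_iff π).mpr ha]
  · have h2 := two_le_card_support_cycleOf_iff.mpr ha
    rw [Ne, inv_eq_iff_eq, eq_comm, apply_apply_eq_self_iff_card_support_cycleOf_eq_two ha]
    omega

theorem cycleOf_self_symm_apply (π : Perm α) (a : α) :
    π.cycleOf (π.symm a) = π.cycleOf a := by
  rw [← cycleOf_self_apply π (π.symm a), apply_symm_apply]

def reverseCycles (π : Perm α) (S : Finset (Perm α)) : Perm α where
  toFun a := if π.cycleOf a ∈ S then π⁻¹ a else π a
  invFun a := if π.cycleOf a ∈ S then π a else π⁻¹ a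
  left_inv a := by by_cases ha : π.cycleOf a ∈ S <;> simp [ha, cycleOf_self_symm_apply]
  right_inv a := by by_cases ha : π.cycleOf a ∈ S <;> simp [ha, cycleOf_self_symm_apply]

theorem reverseCycles_apply (π : Perm α) (S : Finset (Perm α)) (a : α) :
    reverseCycles π S a = if π.cycleOf a ∈ S then π⁻¹ a else π a := rfl

theorem sameCircuitPartition_reverseCycles (π : Perm α) (S : Finset (Perm α)) :
    SameCircuitPartition π (reverseCycles π S) := by
  refine ⟨fun a b => ?_, fun a => ?_⟩
  · by_cases ha : π.cycleOf a ∈ S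
    · refine sameCycle_inv.symm.trans
        (sameCycle_iff_of_forall_sameCycle_apply_eq (fun x hx => ?_) b).symm
      rw [reverseCycles_apply, ← (sameCycle_inv.mp hx).cycleOf_eq, if_pos ha]
    · refine (sameCycle_iff_of_forall_sameCycle_apply_eq (fun x hx => ?_) b).symm
      rw [reverseCycles_apply, ← hx.cycleOf_eq, if_neg ha]
  · rw [reverseCycles_apply]
    split_ifs
    exacts [Or.inr rfl, Or.inl rfl]

/-- On a cycle of length at least three a one-step turn back would close a 2-cycle of `π'`,
so `π'` keeps the direction of `π` along the whole cycle. -/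
theorem _root_.SameCircuitPartition.apply_eq_of_sameCycle {π π' : Perm α} {a b : α}
    (h : SameCircuitPartition π π') (hlong : 3 ≤ #(π.cycleOf a).support)
    (hab : π.SameCycle a b) (ha : π' a = π a) : π' b = π b := by
  have step : ∀ x, π.SameCycle a x → π' x = π x → π' (π x) = π (π x) := by
    intro x hx hx'
    refine (h.2 (π x)).resolve_right fun hback => ?_
    replace hback : π' (π x) = x := hback.trans (π.symm_apply_apply x)
    have hlong' : 3 ≤ #(π.cycleOf x).support := hx.cycleOf_eq ▸ hlong
    have hmove : π x ≠ x := two_le_card_support_cycleOf_iff.mp (by omega)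
    have hmove' : π' x ≠ x := hx' ▸ hmove
    have hsupp : (π'.cycleOf x).support = (π.cycleOf x).support := by
      ext y
      rw [mem_support_cycleOf_iff' hmove, mem_support_cycleOf_iff' hmove', h.1]
    have h2 := (apply_apply_eq_self_iff_card_support_cycleOf_eq_two hmove').mp
      (by rw [hx', hback])
    rw [hsupp] at h2
    omega
  obtain ⟨k, rfl⟩ := hab.exists_nat_pow_eq
  induction k with
  | zero => exact ha
  | succ k ih =>
    rw [pow_succ', mul_apply]
    exact step _ SameCycle.rfl.pow_right (ih SameCycle.rfl.pow_right)

theorem _root_.SameCircuitPartition.apply_eq_inv_apply_of_sameCycle {π π' : Perm α} {a b : α}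
    (h : SameCircuitPartition π π') (hlong : 3 ≤ #(π.cycleOf a).support)
    (hab : π.SameCycle a b) (ha : π' a = π⁻¹ a) : π' b = π⁻¹ b :=
  h.inv.apply_eq_of_sameCycle (by rw [← support_inv, cycleOf_inv] at hlong; convert hlong)
    (sameCycle_inv.mpr hab) ha

def longCycleFactors (π : Perm α) : Finset (Perm α) :=
  π.cycleFactorsFinset.filter fun c => 3 ≤ #c.support

def reversedCycles (π π' : Perm α) : Finset (Perm α) :=
  π.longCycleFactors.filter fun c => ∃ a ∈ c.support, π' a ≠ π a

theorem longCycleCount_eq_card_longCycleFactors (π : Perm α) :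
    longCycleCount π = #π.longCycleFactors := by
  rw [longCycleCount, longCycleFactors, cycleType_def, Multiset.filter_map, Multiset.card_map,
    card_def, filter_val]
  rfl

theorem cycleOf_eq_of_mem_longCycleFactors {π c : Perm α} {a : α}
    (hc : c ∈ π.longCycleFactors) (ha : a ∈ c.support) : π.cycleOf a = c :=
  (cycle_is_cycleOf ha (mem_filter.mp hc).1).symm

theorem inv_apply_ne_apply_of_mem_longCycleFactors {π c : Perm α} {a : α}
    (hc : c ∈ π.longCycleFactors) (ha : a ∈ c.support) : π⁻¹ a ≠ π a :=
  inv_apply_ne_apply_iff_three_le_card_support_cycleOf.mpr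
    (cycleOf_eq_of_mem_longCycleFactors hc ha ▸ (mem_filter.mp hc).2)

theorem reversedCycles_reverseCycles {π : Perm α} {S : Finset (Perm α)}
    (hS : S ⊆ π.longCycleFactors) : reversedCycles π (reverseCycles π S) = S := by
  ext c
  simp only [reversedCycles, mem_filter]
  constructor
  · rintro ⟨hcL, a, ha, hne⟩
    by_contra hcS
    rw [reverseCycles_apply, cycleOf_eq_of_mem_longCycleFactors hcL ha, if_neg hcS] at hne
    exact hne rfl
  · intro hcS
    have hcL := hS hcS
    have hlong := (mem_filter.mp hcL).2
    obtain ⟨a, ha⟩ := card_pos.mp (show 0 < #c.support by omega)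
    refine ⟨hcL, a, ha, ?_⟩
    rw [reverseCycles_apply, cycleOf_eq_of_mem_longCycleFactors hcL ha, if_pos hcS]
    exact inv_apply_ne_apply_of_mem_longCycleFactors hcL ha

theorem reverseCycles_reversedCycles {π π' : Perm α} (h : SameCircuitPartition π π') :
    reverseCycles π (reversedCycles π π') = π' := by
  ext a
  rw [reverseCycles_apply]
  by_cases hlong : 3 ≤ #(π.cycleOf a).support
  · have hmove : π a ≠ a := two_le_card_support_cycleOf_iff.mp (by omega)
    have hcL : π.cycleOf a ∈ π.longCycleFactors :=
      mem_filter.mpr ⟨cycleOf_mem_cycleFactorsFinset_iff.mpr (mem_support.mpr hmove), hlong⟩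
    split_ifs with hrev
    · obtain ⟨-, b, hb, hne⟩ := mem_filter.mp hrev
      have hab := (mem_support_cycleOf_iff' hmove).mp hb
      exact (h.apply_eq_inv_apply_of_sameCycle (hab.cycleOf_eq ▸ hlong) hab.symm
        ((h.2 b).resolve_left hne)).symm
    · have hkeep : ∀ b ∈ (π.cycleOf a).support, π' b = π b := by
        simpa [reversedCycles, hcL] using hrev
      exact (hkeep a ((mem_support_cycleOf_iff' hmove).mpr SameCycle.rfl)).symm
  · have hsym : π⁻¹ a = π a := not_not.mp
      (mt inv_apply_ne_apply_iff_three_le_card_support_cycleOf.mp hlong)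
    have hπ'a : π' a = π a := (h.2 a).elim id (·.trans hsym)
    rw [hsym, hπ'a, ite_self]

theorem card_sameCircuitPartition (π : Perm α) :
    #{π' | SameCircuitPartition π π'} = 2 ^ longCycleCount π := by
  rw [longCycleCount_eq_card_longCycleFactors, ← card_powerset]
  refine (card_nbij' (reverseCycles π) (reversedCycles π) ?_ ?_ ?_ ?_).symm
  · exact fun S _ => mem_filter.mpr ⟨mem_univ _, sameCircuitPartition_reverseCycles π S⟩
  · exact fun π' _ => mem_powerset.mpr (filter_subset _ _)
  · exact fun S hS => reversedCycles_reverseCycles (mem_powerset.mp hS)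
  · exact fun π' hπ' => reverseCycles_reversedCycles (mem_filter.mp hπ').2

theorem twoCycleCount_eq_card_filter (π : Perm α) :
    twoCycleCount π = #(π.cycleFactorsFinset.filter fun c => #c.support = 2) := by
  set F := π.cycleFactorsFinset.filter fun c => #c.support = 2
  have hunion : ({a | π a ≠ a ∧ π (π a) = a} : Finset α) = F.biUnion support := by
    ext a
    simp only [mem_filter, mem_univ, true_and, mem_biUnion, F]
    constructor
    · rintro ⟨hmove, hback⟩
      exact ⟨π.cycleOf a, ⟨cycleOf_mem_cycleFactorsFinset_iff.mpr (mem_support.mpr hmove),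
        (apply_apply_eq_self_iff_card_support_cycleOf_eq_two hmove).mp hback⟩,
        (mem_support_cycleOf_iff' hmove).mpr SameCycle.rfl⟩
    · rintro ⟨c, ⟨hc, hcard⟩, ha⟩
      have hmove : π a ≠ a := mem_support.mp (mem_cycleFactorsFinset_support_le hc ha)
      refine ⟨hmove, (apply_apply_eq_self_iff_card_support_cycleOf_eq_two hmove).mpr ?_⟩
      rwa [← cycle_is_cycleOf ha hc]
  have hdisj : (F : Set (Perm α)).PairwiseDisjoint support := fun c hc d hd hcd =>
    (cycleFactorsFinset_pairwise_disjoint π (mem_filter.mp hc).1 (mem_filter.mp hd).1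
      hcd).disjoint_support
  rw [twoCycleCount, hunion, card_biUnion hdisj,
    sum_congr rfl fun c hc => (mem_filter.mp hc).2, sum_const, smul_eq_mul,
    Nat.mul_div_cancel _ two_pos]

theorem card_cycleType_eq_twoCycleCount_add_longCycleCount (π : Perm α) :
    Multiset.card π.cycleType = twoCycleCount π + longCycleCount π := by
  rw [cycleType_def, Multiset.card_map]
  change #π.cycleFactorsFinset = _
  rw [twoCycleCount_eq_card_filter, longCycleCount_eq_card_longCycleFactors, longCycleFactors,
    ← card_filter_add_card_filter_not (s := π.cycleFactorsFinset) fun c => #c.support = 2]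
  congr 2
  refine filter_congr fun c hc => ?_
  have := (mem_cycleFactorsFinset_iff.mp hc).1.two_le_card_support
  omega

theorem cycleCount_eq_twoCycleCount_add_longCycleCount {π : Perm α} (h : ∀ a, π a ≠ a) :
    cycleCount π = twoCycleCount π + longCycleCount π := by
  rw [cycleCount, card_cycleType_eq_twoCycleCount_add_longCycleCount,
    filter_false_of_mem fun a _ => h a, card_empty, add_zero]

end Equiv.Perm

namespace SimpleGraph

variable {V R : Type*} [Fintype V] (G : SimpleGraph V) [DecidableRel G.Adj] {f : V → V}

theorem prod_adjMatrix_apply_eq_one [CommMonoidWithZero R] (h : ∀ i, G.Adj i (f i)) :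
    ∏ i, G.adjMatrix R i (f i) = 1 :=
  prod_eq_one fun i _ => by rw [adjMatrix_apply, if_pos (h i)]

theorem prod_adjMatrix_apply_ne_zero_iff [CommMonoidWithZero R] [Nontrivial R] :
    ∏ i, G.adjMatrix R i (f i) ≠ 0 ↔ ∀ i, G.Adj i (f i) := by
  refine ⟨fun h i => by_contra fun hi => h (prod_eq_zero (mem_univ i) ?_), fun h => ?_⟩
  · rw [adjMatrix_apply, if_neg hi]
  · rw [G.prod_adjMatrix_apply_eq_one h]
    exact one_ne_zero

end SimpleGraph

theorem ferm_two_eq_sum_circuit_partitions_general {n : ℕ}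
    (G : SimpleGraph (Fin n)) [DecidableRel G.Adj] :
    (∀ π : Equiv.Perm (Fin n), (∏ i, G.adjMatrix ℂ i (π i)) ≠ 0 →
        ∀ i, π i ≠ i ∧ G.Adj i (π i)) ∧
    (∀ π : Equiv.Perm (Fin n), (∏ i, G.adjMatrix ℂ i (π i)) ≠ 0 →
        (Finset.univ.filter fun π' : Equiv.Perm (Fin n) =>
            SameCircuitPartition π π').card = 2 ^ longCycleCount π) ∧
    ferm 2 (G.adjMatrix ℂ) =
      (-1 : ℂ) ^ n * ∑ π : Equiv.Perm (Fin n),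
        (if (∏ i, G.adjMatrix ℂ i (π i)) ≠ 0 then
          ((-2 : ℂ) ^ twoCycleCount π * (-4 : ℂ) ^ longCycleCount π) / 2 ^ longCycleCount π
        else 0) := by
  have contributing (π : Equiv.Perm (Fin n)) (hπ : (∏ i, G.adjMatrix ℂ i (π i)) ≠ 0)
      (i : Fin n) : π i ≠ i ∧ G.Adj i (π i) := by
    have hadj := G.prod_adjMatrix_apply_ne_zero_iff.mp hπ i
    exact ⟨hadj.ne', hadj⟩
  refine ⟨contributing, fun π _ => Equiv.Perm.card_sameCircuitPartition π, ?_⟩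
  rw [ferm, Fintype.card_fin]
  congr 1
  refine sum_congr rfl fun π _ => ?_
  split_ifs with hπ
  · rw [G.prod_adjMatrix_apply_eq_one fun i => (contributing π hπ i).2, mul_one,
      Equiv.Perm.cycleCount_eq_twoCycleCount_add_longCycleCount fun i => (contributing π hπ i).1,
      pow_add, show (-4 : ℂ) = -2 * 2 by norm_num, mul_pow]
    field_simp
  · rw [not_not.mp hπ, mul_zero]

/-- For a simple graph `G` on `n > 4` vertices with adjacency matrix `A`:
(1) every permutation contributing to `Ferm₂ A` is fixed-point free and traces edges of `G`
(hence its cycles form a Hamiltonian-style circuit partition of `G`);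
(2) the circuit partition of a contributing permutation with `c'` cycles of length `≥ 3`
corresponds to exactly `2^{c'}` permutations;
(3) hence `Ferm₂ A = (-1)^n ∑_P (-2)^{c₂(P)} (-4)^{c'(P)}` over circuit partitions `P`,
written here by dividing each permutation's contribution by the size `2^{c'}` of its class. -/
theorem ferm_two_eq_sum_circuit_partitions {n : ℕ} (hn : 4 < n)
    (G : SimpleGraph (Fin n)) [DecidableRel G.Adj] :
    (∀ π : Equiv.Perm (Fin n), (∏ i, G.adjMatrix ℂ i (π i)) ≠ 0 →
        ∀ i, π i ≠ i ∧ G.Adj i (π i)) ∧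
    (∀ π : Equiv.Perm (Fin n), (∏ i, G.adjMatrix ℂ i (π i)) ≠ 0 →
        (Finset.univ.filter fun π' : Equiv.Perm (Fin n) =>
            SameCircuitPartition π π').card = 2 ^ longCycleCount π) ∧
    ferm 2 (G.adjMatrix ℂ) =
      (-1 : ℂ) ^ n * ∑ π : Equiv.Perm (Fin n),
        (if (∏ i, G.adjMatrix ℂ i (π i)) ≠ 0 then
          ((-2 : ℂ) ^ twoCycleCount π * (-4 : ℂ) ^ longCycleCount π) / 2 ^ longCycleCount π
        else 0) :=
  ferm_two_eq_sum_circuit_partitions_general G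
end

section
/- Let G be a finite simple undirected graph on n > 4 vertices with adjacency matrix A, and let #H be the number of Hamiltonian cycles of G (undirected cycles through all vertices, counted without orientation). Then Ferm_2(A) ≡ 4·#H (mod 8); in particular (1/4)·Ferm_2(A) ≡ #H (mod 2). -/
open scoped Classical in
/-- The number of (unoriented) Hamiltonian cycles of a graph `G` on `Fin n`: each
Hamiltonian cycle corresponds to exactly two `n`-cycle permutations tracing edges
of `G` (its two orientations). -/
noncomputable def hamCount {n : ℕ} (G : SimpleGraph (Fin n)) [DecidableRel G.Adj] : ℕ :=
  (Finset.univ.filter fun π : Equiv.Perm (Fin n) =>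
    π.IsCycle ∧ π.support = Finset.univ ∧ ∀ i, G.Adj i (π i)).card / 2

/-!
Only permutations moving every vertex along an edge contribute to `Ferm₂(A)`, each with the term
`(-2)^c`, `c` its number of cycles. Modulo 8 only `c = 1` (the oriented Hamiltonian cycles,
`2·#H` of them) and `c = 2` survive, contributing `-2` and `4`. Inversion pairs such
permutations and preserves `c`; a self-inverse one without fixed points consists of `n/2`
transpositions, so for `n > 4` the pairing has no fixed points when `c ≤ 2`. Hence the number
with `c = 2` is even and `Ferm₂(A) ≡ ±(-4·#H) ≡ 4·#H (mod 8)`.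
-/

open Finset Equiv Equiv.Perm

theorem Finset.even_card_of_involution {α : Type*} {s : Finset α} (f : α → α)
    (hmem : ∀ a ∈ s, f a ∈ s) (hinv : ∀ a ∈ s, f (f a) = a) (hne : ∀ a ∈ s, f a ≠ a) :
    Even #s := by
  rw [← ZMod.natCast_eq_zero_iff_even, card_eq_sum_ones, Nat.cast_sum, Nat.cast_one]
  exact sum_involution (fun a _ => f a) (fun _ _ => by decide) (fun a ha _ => hne a ha)
    hmem hinv

theorem neg_two_pow_eq_ite_zmod_eight {c : ℕ} (hc : 0 < c) :
    (-2 : ZMod 8) ^ c = -2 * (if c = 1 then 1 else 0) + 4 * (if c = 2 then 1 else 0) := by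
  obtain rfl | rfl | ⟨c, rfl⟩ : c = 1 ∨ c = 2 ∨ ∃ d, c = d + 3 := by
    rcases c with _ | _ | _ | d <;> simp_all
  · norm_num
  · norm_num
  · rw [pow_add, show (-2 : ZMod 8) ^ 3 = 0 by decide]
    simp

section CycleCount

variable {α : Type*} [Fintype α] [DecidableEq α]

theorem cycleCount_inv (π : Perm α) : cycleCount π⁻¹ = cycleCount π := by
  simp only [cycleCount, cycleType_inv, Perm.inv_eq_iff_eq]
  simp only [eq_comm]

theorem support_eq_univ_of_forall_ne {π : Perm α} (hπ : ∀ a, π a ≠ a) : π.support = univ :=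
  eq_univ_iff_forall.2 fun a => mem_support.2 (hπ a)

theorem cycleCount_eq_card_cycleType {π : Perm α} (hπ : ∀ a, π a ≠ a) :
    cycleCount π = π.cycleType.card := by
  simp [cycleCount, hπ]

theorem cycleCount_eq_one_iff {π : Perm α} (hπ : ∀ a, π a ≠ a) :
    cycleCount π = 1 ↔ π.IsCycle := by
  rw [cycleCount_eq_card_cycleType hπ, card_cycleType_eq_one]

theorem cycleCount_pos [Nonempty α] {π : Perm α} (hπ : ∀ a, π a ≠ a) : 0 < cycleCount π := by
  rw [cycleCount_eq_card_cycleType hπ, card_cycleType_pos]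
  rintro rfl
  exact hπ (Classical.arbitrary α) rfl

theorem card_eq_two_mul_cycleCount {π : Perm α} (hπ : ∀ a, π a ≠ a) (hinv : π⁻¹ = π) :
    Fintype.card α = 2 * cycleCount π := by
  have hsq : π ^ 2 = 1 := by rw [sq, ← inv_mul_cancel π, hinv]
  rw [cycleCount_eq_card_cycleType hπ, ← card_univ, ← support_eq_univ_of_forall_ne hπ,
    ← sum_cycleType, cycleType_of_pow_prime_eq_one (p := 2) hsq, Multiset.sum_replicate,
    Multiset.card_replicate, smul_eq_mul, mul_comm]

end CycleCount

namespace SimpleGraph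

variable {V : Type*} [Fintype V] [DecidableEq V] (G : SimpleGraph V) [DecidableRel G.Adj]

/-- Permutations moving every vertex along an edge, i.e. covers of `V` by directed cycles of `G`,
where a 2-cycle runs along a single edge back and forth. -/
def cycleCovers : Finset (Perm V) :=
  univ.filter fun π => ∀ v, G.Adj v (π v)

variable {G}

theorem mem_cycleCovers {π : Perm V} : π ∈ G.cycleCovers ↔ ∀ v, G.Adj v (π v) := by
  simp [cycleCovers]

theorem inv_mem_cycleCovers {π : Perm V} (hπ : π ∈ G.cycleCovers) : π⁻¹ ∈ G.cycleCovers :=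
  mem_cycleCovers.2 fun v => by simpa using (mem_cycleCovers.1 hπ (π⁻¹ v)).symm

theorem apply_ne_of_mem_cycleCovers {π : Perm V} (hπ : π ∈ G.cycleCovers) (v : V) : π v ≠ v :=
  (mem_cycleCovers.1 hπ v).ne'

theorem prod_adjMatrix_apply_perm {R : Type*} [CommRing R] (π : Perm V) :
    ∏ v, G.adjMatrix R v (π v) = if π ∈ G.cycleCovers then 1 else 0 := by
  simp only [adjMatrix_apply, Fintype.prod_boole, mem_cycleCovers]

theorem ferm_adjMatrix {R : Type*} [CommRing R] (k : R) :
    ferm k (G.adjMatrix R) =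
      (-1) ^ Fintype.card V * ∑ π ∈ G.cycleCovers, (-k) ^ cycleCount π := by
  simp only [ferm, prod_adjMatrix_apply_perm, mul_ite, mul_one, mul_zero, sum_ite_mem, univ_inter]

theorem even_card_cycleCovers_filter_cycleCount {k : ℕ} (hk : Fintype.card V ≠ 2 * k) :
    Even #{π ∈ G.cycleCovers | cycleCount π = k} := by
  refine even_card_of_involution (· ⁻¹) (fun π hπ => ?_) (fun π _ => inv_inv π)
    fun π hπ hinv => ?_
  all_goals rw [mem_filter] at hπ
  · exact mem_filter.2 ⟨inv_mem_cycleCovers hπ.1, (cycleCount_inv π).trans hπ.2⟩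
  · exact hk (hπ.2 ▸ card_eq_two_mul_cycleCount (apply_ne_of_mem_cycleCovers hπ.1) hinv)

theorem sum_cycleCovers_neg_two_pow_cycleCount [Nonempty V] :
    ∑ π ∈ G.cycleCovers, (-2 : ZMod 8) ^ cycleCount π =
      -2 * #{π ∈ G.cycleCovers | cycleCount π = 1} +
        4 * #{π ∈ G.cycleCovers | cycleCount π = 2} := by
  rw [sum_congr rfl fun π hπ =>
    neg_two_pow_eq_ite_zmod_eight (cycleCount_pos (apply_ne_of_mem_cycleCovers hπ)),
    sum_add_distrib, ← mul_sum, ← mul_sum, sum_boole, sum_boole]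

end SimpleGraph

theorem two_mul_hamCount {n : ℕ} (hn : n ≠ 2) (G : SimpleGraph (Fin n)) [DecidableRel G.Adj] :
    2 * hamCount G = #{π ∈ G.cycleCovers | cycleCount π = 1} := by
  classical
  have hfilter : (univ.filter fun π : Perm (Fin n) =>
      π.IsCycle ∧ π.support = univ ∧ ∀ i, G.Adj i (π i)) =
      {π ∈ G.cycleCovers | cycleCount π = 1} := by
    ext π
    by_cases hπ : π ∈ G.cycleCovers
    · have hne := SimpleGraph.apply_ne_of_mem_cycleCovers hπ
      simp [SimpleGraph.mem_cycleCovers.1 hπ, hπ, cycleCount_eq_one_iff hne,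
        support_eq_univ_of_forall_ne hne]
    · rw [SimpleGraph.mem_cycleCovers] at hπ
      simp [SimpleGraph.mem_cycleCovers, hπ]
  rw [hamCount, hfilter]
  exact Nat.two_mul_div_two_of_even (G.even_card_cycleCovers_filter_cycleCount (by simpa))

/-- For a simple graph on `n > 4` vertices with adjacency matrix `A` and `#H`
Hamiltonian cycles, `Ferm₂ A ≡ 4 · #H (mod 8)`. -/
theorem ferm_two_modEq_four_mul_hamCount {n : ℕ} (hn : 4 < n)
    (G : SimpleGraph (Fin n)) [DecidableRel G.Adj] :
    ferm 2 (G.adjMatrix ℤ) ≡ 4 * (hamCount G : ℤ) [ZMOD 8] := by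
  have : Nonempty (Fin n) := ⟨⟨0, by omega⟩⟩
  obtain ⟨m, hm⟩ := G.even_card_cycleCovers_filter_cycleCount (k := 2) (by simp; omega)
  refine (ZMod.intCast_eq_intCast_iff _ _ 8).1 ?_
  rw [G.ferm_adjMatrix]
  push_cast
  rw [SimpleGraph.sum_cycleCovers_neg_two_pow_cycleCount, ← two_mul_hamCount (by omega), hm]
  push_cast
  have h8 : (8 : ZMod 8) = 0 := rfl
  rcases neg_one_pow_eq_or (ZMod 8) (Fintype.card (Fin n)) with h | h <;> rw [h]
  · linear_combination (m - hamCount G) * h8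
  · linear_combination (-m) * h8
end

section
/- For any n > 4 and any simple graph G on n vertices with adjacency matrix A, Ferm_2(A) is divisible by 4, and Ferm_2(A)/4 is odd iff the number of Hamiltonian cycles of G (counted without orientation) is odd. -/
open Finset Equiv Equiv.Perm

/-- A finset admitting a fixed-point-free involution has even cardinality. -/
lemma even_card_of_invol {β : Type*} (s : Finset β) (g : β → β)
    (gmem : ∀ a ∈ s, g a ∈ s) (ginv : ∀ a ∈ s, g (g a) = a) (gne : ∀ a ∈ s, g a ≠ a) :
    Even s.card := by
  have h0 : ∑ _x ∈ s, (1 : ZMod 2) = 0 :=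
    Finset.sum_involution (fun a ha => g a) (fun a ha => by decide)
      (fun a ha _ => gne a ha) (fun a ha => gmem a ha) (fun a ha => ginv a ha)
  rw [Finset.sum_const, nsmul_eq_mul, mul_one] at h0
  rw [Nat.even_iff, ← Nat.dvd_iff_mod_eq_zero]
  exact (ZMod.natCast_eq_zero_iff _ 2).mp h0

lemma fpf_of_trace {n : ℕ} {G : SimpleGraph (Fin n)} {π : Equiv.Perm (Fin n)}
    (h : ∀ i, G.Adj i (π i)) (a : Fin n) : π a ≠ a := (h a).ne'

lemma cycleCount_eq_card_cycleType_s19 {n : ℕ} {G : SimpleGraph (Fin n)} {π : Equiv.Perm (Fin n)}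
    (h : ∀ i, G.Adj i (π i)) : cycleCount π = π.cycleType.card := by
  have : (Finset.univ.filter fun a => π a = a) = ∅ := by
    ext a; simp [fpf_of_trace h a]
  simp [cycleCount, this]

lemma cycleCount_inv_s19 {n : ℕ} {G : SimpleGraph (Fin n)} {π : Equiv.Perm (Fin n)}
    (h : ∀ i, G.Adj i (π i)) : cycleCount π⁻¹ = cycleCount π := by
  have hfix : (Finset.univ.filter fun a => π⁻¹ a = a)
      = (Finset.univ.filter fun a => π a = a) := by
    ext a
    simp only [Finset.mem_filter, Finset.mem_univ, true_and]
    rw [Equiv.Perm.inv_eq_iff_eq, eq_comm]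
  simp only [cycleCount, Equiv.Perm.cycleType_inv, hfix]

lemma trace_inv {n : ℕ} {G : SimpleGraph (Fin n)} {π : Equiv.Perm (Fin n)}
    (h : ∀ i, G.Adj i (π i)) : ∀ i, G.Adj i (π⁻¹ i) := by
  intro i
  have := h (π⁻¹ i)
  rw [show π (π⁻¹ i) = i from (Equiv.eq_symm_apply π).mp rfl] at this
  exact this.symm

/-- A self-inverse edge-tracing permutation has all cycles of length 2, so `n = 2c`. -/
lemma self_inv_card {n : ℕ} {G : SimpleGraph (Fin n)} {π : Equiv.Perm (Fin n)}
    (h : ∀ i, G.Adj i (π i)) (hself : π⁻¹ = π) : 2 * π.cycleType.card = n := by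
  have hsupp : π.support = Finset.univ := by
    ext a; simp [Equiv.Perm.mem_support, fpf_of_trace h a]
  have hord : orderOf π ∣ 2 := by
    apply orderOf_dvd_of_pow_eq_one
    rw [pow_two]
    nth_rewrite 1 [← hself]
    exact inv_mul_cancel π
  have hall : ∀ m ∈ π.cycleType, m = 2 := by
    intro m hm
    have h2 : 2 ≤ m := Equiv.Perm.two_le_of_mem_cycleType hm
    have hdvd : m ∣ 2 := dvd_trans (Multiset.dvd_lcm hm) (by rwa [Equiv.Perm.lcm_cycleType])
    exact le_antisymm (Nat.le_of_dvd (by norm_num) hdvd) h2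
  have hsum : π.cycleType.sum = n := by
    rw [Equiv.Perm.sum_cycleType, hsupp, Finset.card_univ, Fintype.card_fin]
  rw [Multiset.eq_replicate_card.mpr hall, Multiset.sum_replicate, smul_eq_mul,
    mul_comm] at hsum
  exact hsum

/-- The arithmetic core of the `⊕P`-hardness of `Ferm₂`: for any `n > 4` and any
simple graph `G` on `n` vertices with adjacency matrix `A`, `Ferm₂ A` is divisible
by `4`, and `Ferm₂ A / 4` is odd iff the number of Hamiltonian cycles of `G` is odd. -/
theorem ferm_two_div_four_odd_iff_hamCount_odd {n : ℕ} (hn : 4 < n)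
    (G : SimpleGraph (Fin n)) [DecidableRel G.Adj] :
    (4 : ℤ) ∣ ferm 2 (G.adjMatrix ℤ) ∧
    (Odd (ferm 2 (G.adjMatrix ℤ) / 4) ↔ Odd (hamCount G)) := by
  classical
  have hprod : ∀ π : Equiv.Perm (Fin n),
      ∏ i, (G.adjMatrix ℤ) i (π i) = if (∀ i, G.Adj i (π i)) then 1 else 0 := by
    intro π
    simp only [SimpleGraph.adjMatrix_apply]
    rw [Fintype.prod_boole]
    split_ifs <;> rfl
  -- the sum restricted to edge-tracing permutations
  set E : Finset (Equiv.Perm (Fin n)) :=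
    Finset.univ.filter (fun π => ∀ i, G.Adj i (π i)) with hE
  have hferm : ferm 2 (G.adjMatrix ℤ) =
      (-1 : ℤ) ^ n * ∑ π ∈ E, (-2 : ℤ) ^ cycleCount π := by
    rw [ferm, Fintype.card_fin]
    congr 1
    rw [hE, Finset.sum_filter]
    refine Finset.sum_congr rfl fun π _ => ?_
    rw [hprod π]
    by_cases h : ∀ i, G.Adj i (π i) <;> simp [h]
  -- split E by cycleCount
  set E1 : Finset (Equiv.Perm (Fin n)) := E.filter (fun π => cycleCount π = 1) with hE1
  set E2 : Finset (Equiv.Perm (Fin n)) := E.filter (fun π => cycleCount π = 2) with hE2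
  set E3 : Finset (Equiv.Perm (Fin n)) :=
    E.filter (fun π => cycleCount π ≠ 1 ∧ cycleCount π ≠ 2) with hE3
  have hmemE : ∀ π ∈ E, ∀ i, G.Adj i (π i) := fun π hπ => (Finset.mem_filter.mp hπ).2
  -- involution facts
  have hinvmem : ∀ π ∈ E, π⁻¹ ∈ E := by
    intro π hπ
    simp only [hE, Finset.mem_filter, Finset.mem_univ, true_and] at *
    exact trace_inv hπ
  have hselfinv : ∀ π ∈ E, π⁻¹ = π → 2 * cycleCount π = n := by
    intro π hπ hs
    rw [cycleCount_eq_card_cycleType_s19 (hmemE π hπ)]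
    exact self_inv_card (hmemE π hπ) hs
  have hccinv : ∀ π ∈ E, cycleCount π⁻¹ = cycleCount π :=
    fun π hπ => cycleCount_inv_s19 (hmemE π hπ)
  have heven1 : Even E1.card := by
    apply even_card_of_invol E1 (fun π => π⁻¹)
    · intro a ha
      simp only [hE1, Finset.mem_filter] at ha ⊢
      exact ⟨hinvmem a ha.1, by rw [hccinv a ha.1]; exact ha.2⟩
    · intro a _; exact inv_inv a
    · intro a ha hs
      simp only [hE1, Finset.mem_filter] at ha
      have := hselfinv a ha.1 hs
      rw [ha.2] at this
      omega
  have heven2 : Even E2.card := by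
    apply even_card_of_invol E2 (fun π => π⁻¹)
    · intro a ha
      simp only [hE2, Finset.mem_filter] at ha ⊢
      exact ⟨hinvmem a ha.1, by rw [hccinv a ha.1]; exact ha.2⟩
    · intro a _; exact inv_inv a
    · intro a ha hs
      simp only [hE2, Finset.mem_filter] at ha
      have := hselfinv a ha.1 hs
      rw [ha.2] at this
      omega
  -- E1 is the Hamiltonian-orientation set
  have hE1ham : E1 = Finset.univ.filter fun π : Equiv.Perm (Fin n) =>
      π.IsCycle ∧ π.support = Finset.univ ∧ ∀ i, G.Adj i (π i) := by
    ext π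
    simp only [hE1, hE, Finset.mem_filter, Finset.mem_univ, true_and]
    constructor
    · rintro ⟨htr, hc⟩
      rw [cycleCount_eq_card_cycleType_s19 htr] at hc
      refine ⟨Equiv.Perm.card_cycleType_eq_one.mp hc, ?_, htr⟩
      ext a; simp [Equiv.Perm.mem_support, fpf_of_trace htr a]
    · rintro ⟨hcyc, hsupp, htr⟩
      refine ⟨htr, ?_⟩
      rw [cycleCount_eq_card_cycleType_s19 htr]
      exact Equiv.Perm.card_cycleType_eq_one.mpr hcyc
  have hham : E1.card = 2 * hamCount G := by
    rw [hamCount, ← hE1ham]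
    obtain ⟨k, hk⟩ := heven1
    omega
  -- sum decomposition
  have hsplit : ∑ π ∈ E, (-2 : ℤ) ^ cycleCount π =
      -2 * E1.card + 4 * E2.card + ∑ π ∈ E3, (-2 : ℤ) ^ cycleCount π := by
    have hd12 : Disjoint E1 E2 := by
      rw [hE1, hE2, Finset.disjoint_filter]
      intro π _ h1; omega
    have hd123 : Disjoint (E1 ∪ E2) E3 := by
      rw [Finset.disjoint_union_left, hE1, hE2, hE3]
      constructor <;> (rw [Finset.disjoint_filter]; intro π hπ h1) <;> omega
    have hcover : E1 ∪ E2 ∪ E3 = E := by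
      ext π
      simp only [Finset.mem_union, hE1, hE2, hE3, Finset.mem_filter]
      constructor
      · rintro ((h | h) | h) <;> exact h.1
      · intro h
        by_cases h1 : cycleCount π = 1
        · exact Or.inl (Or.inl ⟨h, h1⟩)
        by_cases h2 : cycleCount π = 2
        · exact Or.inl (Or.inr ⟨h, h2⟩)
        · exact Or.inr ⟨h, h1, h2⟩
    rw [← hcover, Finset.sum_union hd123, Finset.sum_union hd12]
    congr 2
    · rw [Finset.sum_congr rfl (fun π hπ => by
        rw [(Finset.mem_filter.mp hπ).2]), Finset.sum_const, nsmul_eq_mul]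
      ring
    · rw [Finset.sum_congr rfl (fun π hπ => by
        rw [(Finset.mem_filter.mp hπ).2]), Finset.sum_const, nsmul_eq_mul]
      ring
  have hE3dvd : (8 : ℤ) ∣ ∑ π ∈ E3, (-2 : ℤ) ^ cycleCount π := by
    apply Finset.dvd_sum
    intro π hπ
    simp only [hE3, Finset.mem_filter] at hπ
    have hge1 : 1 ≤ cycleCount π := by
      rcases hπ with ⟨hπE, h1, h2⟩
      have htr := hmemE π hπE
      rw [cycleCount_eq_card_cycleType_s19 htr]
      by_contra h
      have : π.cycleType.card = 0 := by omega
      have h1 : π = 1 := Equiv.Perm.card_cycleType_eq_zero.mp this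
      have hne := fpf_of_trace htr ⟨0, by omega⟩
      rw [h1] at hne
      simp at hne
    have h3 : 3 ≤ cycleCount π := by omega
    obtain ⟨k, hk⟩ := Nat.exists_eq_add_of_le h3
    rw [hk, pow_add]
    exact Dvd.dvd.mul_right (by norm_num) _
  obtain ⟨m, hm⟩ := heven2
  obtain ⟨t, ht⟩ := hE3dvd
  have hS : ∑ π ∈ E, (-2 : ℤ) ^ cycleCount π =
      4 * (-(hamCount G : ℤ) + 2 * m + 2 * t) := by
    rw [hsplit, hham, ht, hm]
    push_cast
    ring
  have hfermeq : ferm 2 (G.adjMatrix ℤ) =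
      4 * ((-1 : ℤ) ^ n * (-(hamCount G : ℤ) + 2 * m + 2 * t)) := by
    rw [hferm, hS]; ring
  refine ⟨⟨_, hfermeq⟩, ?_⟩
  rw [hfermeq, Int.mul_ediv_cancel_left _ (by norm_num)]
  have hu : Odd (-(hamCount G : ℤ) + 2 * m + 2 * t) ↔ Odd (hamCount G) := by
    rw [← Int.odd_coe_nat, Int.odd_iff, Int.odd_iff]
    omega
  rcases Nat.even_or_odd n with he | ho
  · rw [he.neg_one_pow, one_mul]; exact hu
  · rw [ho.neg_one_pow, neg_one_mul, odd_neg]; exact hu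
end
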